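/- Let d ≥ 2, s ∈ (0,1), μ > 0, 2μ + λ > 0. For every x ∈ ℝ^d and t > 0 the integral (t^{2s}/(2^{2s}Γ(s))) ∫_0^∞ W(x,r) e^{−t²/(4r)} r^{−s−1} dr converges absolutely (entrywise) and equals the matrix P(x,t) := μ^s (Γ(d/2+s)/(π^{d/2}Γ(s))) · t^{2s}/(|x|²+μt²)^{(d+2s)/2} · I − (Γ(d/2+s)/(2π^{d/2}Γ(s))) t^{2s} (∫_μ^{2μ+λ} σ^{s−1}/(|x|²+σt²)^{(d+2s)/2} dσ) · I + (d+2s)(Γ(d/2+s)/(2π^{d/2}Γ(s))) t^{2s} (∫_μ^{2μ+λ} σ^{s−1}/(|x|²+σt²)^{(d+2s+2)/2} dσ) · (x⊗x). -/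

import Mathlib

/-!
Substituting `σ = τ r` turns `W(x,r) e^{-t²/(4r)} r^{-s-1}` into `δᵢⱼ H(x,μr)` plus an
integral over `τ` between `μ` and `2μ+λ` of `r ∂ᵢ∂ⱼH(x,τr)`, all multiplied by
`e^{-t²/(4r)} r^{-s-1}`. Every term is then a multiple of `H(x,τr) e^{-t²/(4r)} r^{-e-1}`, and
`r ↦ 1/r` turns the integral of that over `r > 0` into a Gamma integral:
`∫₀^∞ H(x,τr) e^{-t²/(4r)} r^{-e-1} dr = (4τ)^e Γ(d/2+e) / (π^{d/2} (|x|²+τt²)^{d/2+e})`.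
These closed forms are continuous in `τ > 0`, so they bound the absolute integrals uniformly on
the compact `τ`-interval; Fubini then swaps the `r`- and `τ`-integrals, and what remains is
algebra.
-/

open Real MeasureTheory

noncomputable section

/-- The classical heat kernel `H(x,t) = (4πt)^{−d/2} e^{−|x|²/(4t)}`. -/
def heatKernel (d : ℕ) (x : EuclideanSpace ℝ (Fin d)) (t : ℝ) : ℝ :=
  (4 * π * t) ^ (-(d : ℝ) / 2) * Real.exp (-‖x‖ ^ 2 / (4 * t))

/-- The entries of the Hessian `∇²H(x,σ)` of the heat kernel. -/
def heatHessEntry (d : ℕ) (x : EuclideanSpace ℝ (Fin d)) (σ : ℝ) (i j : Fin d) : ℝ :=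
  (4 * π * σ) ^ (-(d : ℝ) / 2) * Real.exp (-‖x‖ ^ 2 / (4 * σ)) *
    (x i * x j / (4 * σ ^ 2) - (if i = j then 1 else 0) / (2 * σ))

/-- The entries of the Lamé–Navier heat kernel
`W(x,t) = H(x,μt) I + ∫_{μt}^{(2μ+λ)t} ∇²H(x,σ) dσ`. -/
def lameHeatEntry (d : ℕ) (μ lam : ℝ) (x : EuclideanSpace ℝ (Fin d)) (t : ℝ)
    (i j : Fin d) : ℝ :=
  heatKernel d x (μ * t) * (if i = j then 1 else 0) +
    ∫ σ in (μ * t)..((2 * μ + lam) * t), heatHessEntry d x σ i j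

/-- The entries of the Poisson kernel `P(x,t)` for the Lamé–Navier extension problem. -/
def lamePoissonEntry (d : ℕ) (s μ lam : ℝ) (x : EuclideanSpace ℝ (Fin d)) (t : ℝ)
    (i j : Fin d) : ℝ :=
  μ ^ s * (Real.Gamma ((d : ℝ) / 2 + s) / (π ^ ((d : ℝ) / 2) * Real.Gamma s)) *
      (t ^ (2 * s) / (‖x‖ ^ 2 + μ * t ^ 2) ^ (((d : ℝ) + 2 * s) / 2)) *
      (if i = j then 1 else 0) -
    (Real.Gamma ((d : ℝ) / 2 + s) / (2 * π ^ ((d : ℝ) / 2) * Real.Gamma s)) * t ^ (2 * s) *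
      (∫ σ in μ..(2 * μ + lam),
        σ ^ (s - 1) / (‖x‖ ^ 2 + σ * t ^ 2) ^ (((d : ℝ) + 2 * s) / 2)) *
      (if i = j then 1 else 0) +
    ((d : ℝ) + 2 * s) *
      (Real.Gamma ((d : ℝ) / 2 + s) / (2 * π ^ ((d : ℝ) / 2) * Real.Gamma s)) * t ^ (2 * s) *
      (∫ σ in μ..(2 * μ + lam),
        σ ^ (s - 1) / (‖x‖ ^ 2 + σ * t ^ 2) ^ (((d : ℝ) + 2 * s + 2) / 2)) *
      (x i * x j)

open Set

section Mellin

variable {a A : ℝ}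

/-- The integrand of `integral_comp_rpow_Ioi` for `p = -1`, i.e. the substitution `r ↦ r⁻¹`. -/
lemma exp_neg_div_mul_rpow_eq_smul_comp_inv {r : ℝ} (hr : 0 < r) :
    exp (-A / r) * r ^ (-a - 1) =
      (|(-1 : ℝ)| * r ^ ((-1 : ℝ) - 1)) •
        ((r ^ (-1 : ℝ)) ^ (a - 1) * exp (-(A * r ^ (-1 : ℝ)))) := by
  rw [smul_eq_mul, abs_neg, abs_one, one_mul, ← rpow_mul hr.le, rpow_neg_one, ← mul_assoc,
    ← rpow_add hr, div_eq_mul_inv, neg_mul]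
  ring_nf

lemma integrableOn_exp_neg_div_mul_rpow (ha : 0 < a) (hA : 0 < A) :
    IntegrableOn (fun r : ℝ => exp (-A / r) * r ^ (-a - 1)) (Ioi 0) := by
  have hGamma : IntegrableOn (fun u : ℝ => u ^ (a - 1) * exp (-(A * u))) (Ioi 0) := by
    simpa only [rpow_one, neg_mul] using
      integrableOn_rpow_mul_exp_neg_mul_rpow (p := 1) (by linarith) one_pos hA
  exact ((integrableOn_Ioi_comp_rpow_iff _ (by norm_num)).2 hGamma).congr_fun
    (fun r hr => (exp_neg_div_mul_rpow_eq_smul_comp_inv hr).symm) measurableSet_Ioi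

lemma integral_exp_neg_div_mul_rpow (ha : 0 < a) (hA : 0 < A) :
    ∫ r in Ioi 0, exp (-A / r) * r ^ (-a - 1) = Gamma a / A ^ a := by
  rw [setIntegral_congr_fun measurableSet_Ioi fun _ => exp_neg_div_mul_rpow_eq_smul_comp_inv,
    integral_comp_rpow_Ioi (fun u => u ^ (a - 1) * exp (-(A * u))) (by norm_num),
    integral_rpow_mul_exp_neg_mul_Ioi ha hA, one_div, inv_rpow hA.le, inv_mul_eq_div]

end Mellin

section Subordinand

variable {d : ℕ} {x : EuclideanSpace ℝ (Fin d)} {t e τ r : ℝ}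

def heatSubordinand (d : ℕ) (x : EuclideanSpace ℝ (Fin d)) (t e τ r : ℝ) : ℝ :=
  heatKernel d x (τ * r) * exp (-t ^ 2 / (4 * r)) * r ^ (-e - 1)

lemma heatSubordinand_nonneg (hτ : 0 ≤ τ) (hr : 0 ≤ r) : 0 ≤ heatSubordinand d x t e τ r := by
  unfold heatSubordinand heatKernel
  positivity

lemma heatSubordinand_eq (hτ : 0 < τ) (hr : 0 < r) :
    heatSubordinand d x t e τ r =
      (4 * π * τ) ^ (-(d : ℝ) / 2) *
        (exp (-((‖x‖ ^ 2 / τ + t ^ 2) / 4) / r) * r ^ (-((d : ℝ) / 2 + e) - 1)) := by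
  have hexp : exp (-((‖x‖ ^ 2 / τ + t ^ 2) / 4) / r) =
      exp (-‖x‖ ^ 2 / (4 * (τ * r))) * exp (-t ^ 2 / (4 * r)) := by
    rw [← exp_add]; congr 1; field_simp; ring
  have hpow : r ^ (-((d : ℝ) / 2 + e) - 1) = r ^ (-(d : ℝ) / 2) * r ^ (-e - 1) := by
    rw [← rpow_add hr]; ring_nf
  rw [heatSubordinand, heatKernel, show 4 * π * (τ * r) = 4 * π * τ * r by ring,
    mul_rpow (by positivity) hr.le, hexp, hpow]
  ring

lemma integrableOn_heatSubordinand (ht : 0 < t) (hτ : 0 < τ) (he : 0 < (d : ℝ) / 2 + e) :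
    IntegrableOn (heatSubordinand d x t e τ) (Ioi 0) :=
  IntegrableOn.congr_fun ((integrableOn_exp_neg_div_mul_rpow he (by positivity)).const_mul _)
    (fun _ hr => (heatSubordinand_eq hτ hr).symm) measurableSet_Ioi

lemma integral_heatSubordinand (ht : 0 < t) (hτ : 0 < τ) (he : 0 < (d : ℝ) / 2 + e) :
    ∫ r in Ioi 0, heatSubordinand d x t e τ r =
      (4 * τ) ^ e * Gamma ((d : ℝ) / 2 + e) /
        (π ^ ((d : ℝ) / 2) * (‖x‖ ^ 2 + τ * t ^ 2) ^ ((d : ℝ) / 2 + e)) := by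
  have hX : 0 < ‖x‖ ^ 2 + τ * t ^ 2 := by positivity
  have hB : (‖x‖ ^ 2 / τ + t ^ 2) / 4 = (‖x‖ ^ 2 + τ * t ^ 2) / (4 * τ) := by field_simp
  rw [setIntegral_congr_fun measurableSet_Ioi fun _ hr => heatSubordinand_eq hτ hr,
    integral_const_mul, integral_exp_neg_div_mul_rpow he (by positivity), hB,
    div_rpow hX.le (by positivity), rpow_add (by positivity : 0 < 4 * τ) ((d : ℝ) / 2) e,
    mul_comm 4 π, mul_assoc, mul_rpow pi_pos.le (by positivity), neg_div,
    rpow_neg (by positivity), rpow_neg (by positivity)]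
  have : 0 < π ^ ((d : ℝ) / 2) := by positivity
  have : 0 < (4 * τ) ^ ((d : ℝ) / 2) := by positivity
  have : 0 < (‖x‖ ^ 2 + τ * t ^ 2) ^ ((d : ℝ) / 2 + e) := by positivity
  field_simp

end Subordinand

section HessSubordinand

variable {d : ℕ} {x : EuclideanSpace ℝ (Fin d)} {t s τ r m M : ℝ} {i j : Fin d}

def hessSubordinand (d : ℕ) (x : EuclideanSpace ℝ (Fin d)) (t s : ℝ) (i j : Fin d) (r τ : ℝ) :
    ℝ :=
  heatHessEntry d x (τ * r) i j * r * exp (-t ^ 2 / (4 * r)) * r ^ (-s - 1)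

lemma hessSubordinand_eq (hτ : τ ≠ 0) (hr : 0 < r) :
    hessSubordinand d x t s i j r τ =
      x i * x j / (4 * τ ^ 2) * heatSubordinand d x t (s + 1) τ r -
        (if i = j then 1 else 0) / (2 * τ) * heatSubordinand d x t s τ r := by
  have hpow : r ^ (-(s + 1) - 1) = r ^ (-s - 1) / r := by
    rw [sub_eq_add_neg, sub_eq_add_neg, rpow_add hr, rpow_neg_one, div_eq_mul_inv]; ring_nf
  rw [hessSubordinand, heatSubordinand, heatSubordinand, hpow, heatHessEntry, ← heatKernel]
  field_simp

lemma integrableOn_hessSubordinand (ht : 0 < t) (hτ : 0 < τ) (hs : 0 < (d : ℝ) / 2 + s) :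
    IntegrableOn (fun r => hessSubordinand d x t s i j r τ) (Ioi 0) :=
  IntegrableOn.congr_fun
    (((integrableOn_heatSubordinand ht hτ (by linarith)).const_mul _).sub
      ((integrableOn_heatSubordinand ht hτ hs).const_mul _))
    (fun _ hr => (hessSubordinand_eq hτ.ne' hr).symm) measurableSet_Ioi

lemma integral_hessSubordinand (ht : 0 < t) (hτ : 0 < τ) (hs : 0 < (d : ℝ) / 2 + s) :
    ∫ r in Ioi 0, hessSubordinand d x t s i j r τ =
      x i * x j / (4 * τ ^ 2) * (∫ r in Ioi 0, heatSubordinand d x t (s + 1) τ r) -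
        (if i = j then 1 else 0) / (2 * τ) * ∫ r in Ioi 0, heatSubordinand d x t s τ r := by
  rw [setIntegral_congr_fun measurableSet_Ioi fun _ hr => hessSubordinand_eq hτ.ne' hr,
    integral_sub ((integrableOn_heatSubordinand ht hτ (by linarith)).const_mul _)
      ((integrableOn_heatSubordinand ht hτ hs).const_mul _),
    integral_const_mul, integral_const_mul]

lemma integral_norm_hessSubordinand_le (ht : 0 < t) (hτ : 0 < τ) (hs : 0 < (d : ℝ) / 2 + s) :
    ∫ r in Ioi 0, ‖hessSubordinand d x t s i j r τ‖ ≤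
      |x i * x j / (4 * τ ^ 2)| * (∫ r in Ioi 0, heatSubordinand d x t (s + 1) τ r) +
        |(if i = j then 1 else 0) / (2 * τ)| * ∫ r in Ioi 0, heatSubordinand d x t s τ r := by
  have h1 := (integrableOn_heatSubordinand (x := x) ht hτ (e := s + 1) (by linarith)).const_mul
    |x i * x j / (4 * τ ^ 2)|
  have h2 := (integrableOn_heatSubordinand (x := x) ht hτ hs).const_mul
    |(if i = j then (1 : ℝ) else 0) / (2 * τ)|
  rw [← integral_const_mul, ← integral_const_mul, ← integral_add h1 h2]
  refine setIntegral_mono_on (integrableOn_hessSubordinand ht hτ hs).norm (h1.add h2)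
    measurableSet_Ioi fun r hr => ?_
  rw [hessSubordinand_eq hτ.ne' hr]
  refine (norm_sub_le _ _).trans_eq ?_
  simp only [norm_mul, Real.norm_eq_abs, abs_of_nonneg (heatSubordinand_nonneg hτ.le hr.le)]

lemma continuousOn_integral_heatSubordinand (ht : 0 < t) (hm : 0 < m) (e : ℝ) :
    ContinuousOn (fun τ => (4 * τ) ^ e * Gamma ((d : ℝ) / 2 + e) /
        (π ^ ((d : ℝ) / 2) * (‖x‖ ^ 2 + τ * t ^ 2) ^ ((d : ℝ) / 2 + e))) (Icc m M) := by
  have hX : ∀ τ ∈ Icc m M, 0 < ‖x‖ ^ 2 + τ * t ^ 2 := fun τ hτ => by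
    have := hm.trans_le hτ.1; positivity
  refine ContinuousOn.div ?_ ?_ fun τ hτ => by have := hX τ hτ; positivity
  · refine (ContinuousOn.rpow_const (by fun_prop) fun τ hτ => Or.inl ?_).mul continuousOn_const
    linarith [hm.trans_le hτ.1]
  · exact continuousOn_const.mul
      (ContinuousOn.rpow_const (by fun_prop) fun τ hτ => Or.inl (hX τ hτ).ne')

lemma integrable_uncurry_hessSubordinand (ht : 0 < t) (hm : 0 < m) (hs : 0 < (d : ℝ) / 2 + s) :
    Integrable (Function.uncurry (hessSubordinand d x t s i j))
      ((volume.restrict (Ioi 0)).prod (volume.restrict (Ioc m M))) := by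
  have hmeas : Measurable (Function.uncurry (hessSubordinand d x t s i j)) := by
    unfold Function.uncurry hessSubordinand heatHessEntry
    fun_prop
  refine (integrable_prod_iff' hmeas.aestronglyMeasurable).2 ⟨?_, ?_⟩
  · filter_upwards [ae_restrict_mem measurableSet_Ioc] with τ hτ
    exact integrableOn_hessSubordinand ht (hm.trans hτ.1) hs
  have hbound : ContinuousOn (fun τ => |x i * x j / (4 * τ ^ 2)| *
      ((4 * τ) ^ (s + 1) * Gamma ((d : ℝ) / 2 + (s + 1)) /
        (π ^ ((d : ℝ) / 2) * (‖x‖ ^ 2 + τ * t ^ 2) ^ ((d : ℝ) / 2 + (s + 1)))) +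
      |(if i = j then 1 else 0) / (2 * τ)| *
      ((4 * τ) ^ s * Gamma ((d : ℝ) / 2 + s) /
        (π ^ ((d : ℝ) / 2) * (‖x‖ ^ 2 + τ * t ^ 2) ^ ((d : ℝ) / 2 + s)))) (Icc m M) := by
    have hτ : ∀ τ ∈ Icc m M, τ ≠ 0 := fun τ hτ => (hm.trans_le hτ.1).ne'
    refine ((ContinuousOn.abs ?_).mul (continuousOn_integral_heatSubordinand ht hm _)).add
      ((ContinuousOn.abs ?_).mul (continuousOn_integral_heatSubordinand ht hm _))
    · exact continuousOn_const.div (by fun_prop) fun τ hτ' => by have := hτ τ hτ'; positivity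
    · exact continuousOn_const.div (by fun_prop) fun τ hτ' => by have := hτ τ hτ'; positivity
  refine Integrable.mono' (hbound.integrableOn_Icc.mono_set Ioc_subset_Icc_self)
    (hmeas.comp measurable_swap).norm.aestronglyMeasurable.integral_prod_right' ?_
  filter_upwards [ae_restrict_mem measurableSet_Ioc] with τ hτ
  have hτ0 : 0 < τ := hm.trans hτ.1
  rw [Real.norm_of_nonneg (integral_nonneg fun _ => norm_nonneg _),
    ← integral_heatSubordinand ht hτ0 (by linarith), ← integral_heatSubordinand ht hτ0 hs]
  exact integral_norm_hessSubordinand_le ht hτ0 hs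

end HessSubordinand

section IntervalFubini

open scoped Interval

variable {α E : Type*} [MeasurableSpace α] {ν : Measure α}
  [NormedAddCommGroup E] [NormedSpace ℝ E] {f : α → ℝ → E} {a b : ℝ}

lemma integrable_intervalIntegral_of_integrable_uncurry
    (hf : Integrable (Function.uncurry f) (ν.prod (volume.restrict (Ι a b)))) :
    Integrable (fun r => ∫ τ in a..b, f r τ) ν := by
  simp_rw [intervalIntegral.intervalIntegral_eq_integral_uIoc]
  exact hf.integral_prod_left.smul _

lemma integral_intervalIntegral_swap [SFinite ν]
    (hf : Integrable (Function.uncurry f) (ν.prod (volume.restrict (Ι a b)))) :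
    ∫ r, (∫ τ in a..b, f r τ) ∂ν = ∫ τ in a..b, ∫ r, f r τ ∂ν := by
  simp_rw [intervalIntegral.intervalIntegral_eq_integral_uIoc, integral_smul]
  rw [integral_integral_swap hf]

end IntervalFubini

lemma lameHeatEntry_mul_eq {d : ℕ} {μ lam t s r : ℝ} {x : EuclideanSpace ℝ (Fin d)}
    {i j : Fin d} (hr : 0 < r) :
    lameHeatEntry d μ lam x r i j * exp (-t ^ 2 / (4 * r)) * r ^ (-s - 1) =
      (if i = j then 1 else 0) * heatSubordinand d x t s μ r +
        ∫ τ in μ..(2 * μ + lam), hessSubordinand d x t s i j r τ := by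
  have hsubst : ∫ σ in (μ * r)..((2 * μ + lam) * r), heatHessEntry d x σ i j =
      r * ∫ τ in μ..(2 * μ + lam), heatHessEntry d x (τ * r) i j := by
    rw [intervalIntegral.integral_comp_mul_right (fun σ => heatHessEntry d x σ i j) hr.ne',
      smul_eq_mul, mul_inv_cancel_left₀ hr.ne']
  simp only [hessSubordinand, intervalIntegral.integral_mul_const]
  rw [lameHeatEntry, hsubst, heatSubordinand]
  ring

section Closed

variable {d : ℕ} {x : EuclideanSpace ℝ (Fin d)} {t s τ : ℝ} {i j : Fin d}

lemma two_rpow_two_mul (s : ℝ) : (2 : ℝ) ^ (2 * s) = 4 ^ s := by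
  rw [rpow_mul zero_le_two]; norm_num

lemma subordination_integral_heatSubordinand (ht : 0 < t) (hτ : 0 < τ) (hs : 0 < s) :
    t ^ (2 * s) / ((2 : ℝ) ^ (2 * s) * Gamma s) * ∫ r in Ioi 0, heatSubordinand d x t s τ r =
      τ ^ s * (Gamma ((d : ℝ) / 2 + s) / (π ^ ((d : ℝ) / 2) * Gamma s)) *
        (t ^ (2 * s) / (‖x‖ ^ 2 + τ * t ^ 2) ^ (((d : ℝ) + 2 * s) / 2)) := by
  rw [integral_heatSubordinand ht hτ (by positivity), two_rpow_two_mul,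
    mul_rpow (by norm_num) hτ.le, show (d : ℝ) / 2 + s = ((d : ℝ) + 2 * s) / 2 by ring]
  have : 0 < Gamma s := Gamma_pos_of_pos hs
  have : 0 < (‖x‖ ^ 2 + τ * t ^ 2) ^ (((d : ℝ) + 2 * s) / 2) := by positivity
  field_simp

lemma subordination_integral_hessSubordinand (ht : 0 < t) (hτ : 0 < τ) (hs : 0 < s) :
    t ^ (2 * s) / ((2 : ℝ) ^ (2 * s) * Gamma s) * ∫ r in Ioi 0, hessSubordinand d x t s i j r τ =
      ((d : ℝ) + 2 * s) *
          (Gamma ((d : ℝ) / 2 + s) / (2 * π ^ ((d : ℝ) / 2) * Gamma s)) * t ^ (2 * s) *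
          (τ ^ (s - 1) / (‖x‖ ^ 2 + τ * t ^ 2) ^ (((d : ℝ) + 2 * s + 2) / 2)) * (x i * x j) -
        Gamma ((d : ℝ) / 2 + s) / (2 * π ^ ((d : ℝ) / 2) * Gamma s) * t ^ (2 * s) *
          (τ ^ (s - 1) / (‖x‖ ^ 2 + τ * t ^ 2) ^ (((d : ℝ) + 2 * s) / 2)) *
          (if i = j then 1 else 0) := by
  have hds : 0 < (d : ℝ) / 2 + s := by positivity
  rw [integral_hessSubordinand ht hτ hds, integral_heatSubordinand ht hτ (by linarith),
    integral_heatSubordinand ht hτ hds, two_rpow_two_mul, ← add_assoc, Gamma_add_one hds.ne',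
    show (d : ℝ) / 2 + s + 1 = ((d : ℝ) + 2 * s + 2) / 2 by ring,
    show (d : ℝ) / 2 + s = ((d : ℝ) + 2 * s) / 2 by ring,
    mul_rpow (by norm_num) hτ.le, mul_rpow (by norm_num) hτ.le, rpow_add_one (by norm_num),
    rpow_add_one hτ.ne']
  have hτs : τ ^ s = τ ^ (s - 1) * τ := by rw [← rpow_add_one hτ.ne', sub_add_cancel]
  have : 0 < Gamma s := Gamma_pos_of_pos hs
  have : 0 < (‖x‖ ^ 2 + τ * t ^ 2) ^ (((d : ℝ) + 2 * s) / 2) := by positivity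
  have : 0 < (‖x‖ ^ 2 + τ * t ^ 2) ^ (((d : ℝ) + 2 * s + 2) / 2) := by positivity
  rw [hτs]
  field_simp

end Closed

lemma intervalIntegrable_rpow_div_add_mul_rpow {a b y c q p : ℝ} (ha : 0 < a) (hb : 0 < b)
    (hy : 0 ≤ y) (hc : 0 < c) :
    IntervalIntegrable (fun τ => τ ^ q / (y + τ * c) ^ p) volume a b := by
  have hτ : ∀ τ ∈ uIcc a b, 0 < τ := fun τ hτ => (lt_min ha hb).trans_le hτ.1
  refine ContinuousOn.intervalIntegrable (ContinuousOn.div ?_ ?_ fun τ hτ' => ?_)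
  · exact continuousOn_id.rpow_const fun τ hτ' => Or.inl (hτ τ hτ').ne'
  · exact ContinuousOn.rpow_const (by fun_prop) fun τ hτ' => Or.inl (by
      have := hτ τ hτ'; positivity)
  · have := hτ τ hτ'; positivity

theorem lamePoisson_subordination_general (d : ℕ) (s : ℝ)
    (hs : s ∈ Set.Ioo (0 : ℝ) 1) (μ lam : ℝ) (hμ : 0 < μ) (hlam : 0 < 2 * μ + lam)
    (x : EuclideanSpace ℝ (Fin d)) (t : ℝ) (ht : 0 < t) (i j : Fin d) :
    IntegrableOn
      (fun r : ℝ =>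
        lameHeatEntry d μ lam x r i j * Real.exp (-t ^ 2 / (4 * r)) * r ^ (-s - 1))
      (Set.Ioi 0) ∧
    (t ^ (2 * s) / ((2 : ℝ) ^ (2 * s) * Real.Gamma s)) *
        (∫ r in Set.Ioi (0 : ℝ),
          lameHeatEntry d μ lam x r i j * Real.exp (-t ^ 2 / (4 * r)) * r ^ (-s - 1)) =
      lamePoissonEntry d s μ lam x t i j := by
  have hds : 0 < (d : ℝ) / 2 + s := by linarith [hs.1, (by positivity : (0 : ℝ) ≤ d / 2)]
  have hprod := integrable_uncurry_hessSubordinand (x := x) (i := i) (j := j)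
    (M := max μ (2 * μ + lam)) ht (lt_min hμ hlam) hds
  have hheat := (integrableOn_heatSubordinand (x := x) ht hμ hds).const_mul
    (if i = j then (1 : ℝ) else 0)
  have hhess := integrable_intervalIntegral_of_integrable_uncurry hprod
  have hsplit : EqOn _ _ (Ioi (0 : ℝ)) := fun r hr => lameHeatEntry_mul_eq (μ := μ)
    (lam := lam) (t := t) (s := s) (x := x) (i := i) (j := j) hr
  refine ⟨IntegrableOn.congr_fun (hheat.add hhess) hsplit.symm measurableSet_Ioi, ?_⟩
  have hτ : ∀ τ ∈ uIcc μ (2 * μ + lam), 0 < τ := fun τ hτ => (lt_min hμ hlam).trans_le hτ.1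
  have hx : 0 ≤ ‖x‖ ^ 2 := by positivity
  have hint (p : ℝ) :=
    intervalIntegrable_rpow_div_add_mul_rpow (q := s - 1) (p := p) hμ hlam hx (pow_pos ht 2)
  rw [setIntegral_congr_fun measurableSet_Ioi hsplit, integral_add hheat hhess,
    integral_const_mul, integral_intervalIntegral_swap hprod, mul_add, mul_left_comm,
    subordination_integral_heatSubordinand ht hμ hs.1, ← intervalIntegral.integral_const_mul,
    intervalIntegral.integral_congr fun τ hτ' =>
      subordination_integral_hessSubordinand ht (hτ τ hτ') hs.1,
    intervalIntegral.integral_sub (((hint _).const_mul _).mul_const _)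
      (((hint _).const_mul _).mul_const _),
    intervalIntegral.integral_mul_const, intervalIntegral.integral_mul_const,
    intervalIntegral.integral_const_mul, intervalIntegral.integral_const_mul, lamePoissonEntry]
  ring

/-- The subordination formula for the Lamé–Navier Poisson kernel: the integral
`(t^{2s}/(2^{2s}Γ(s))) ∫_0^∞ W(x,r) e^{−t²/(4r)} r^{−s−1} dr` converges absolutely
entrywise and equals the closed-form expression `P(x,t)`. -/
theorem lamePoisson_subordination (d : ℕ) (hd : 2 ≤ d) (s : ℝ)
    (hs : s ∈ Set.Ioo (0 : ℝ) 1) (μ lam : ℝ) (hμ : 0 < μ) (hlam : 0 < 2 * μ + lam)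
    (x : EuclideanSpace ℝ (Fin d)) (t : ℝ) (ht : 0 < t) (i j : Fin d) :
    IntegrableOn
      (fun r : ℝ =>
        lameHeatEntry d μ lam x r i j * Real.exp (-t ^ 2 / (4 * r)) * r ^ (-s - 1))
      (Set.Ioi 0) ∧
    (t ^ (2 * s) / ((2 : ℝ) ^ (2 * s) * Real.Gamma s)) *
        (∫ r in Set.Ioi (0 : ℝ),
          lameHeatEntry d μ lam x r i j * Real.exp (-t ^ 2 / (4 * r)) * r ^ (-s - 1)) =
      lamePoissonEntry d s μ lam x t i j :=
  lamePoisson_subordination_general d s hs μ lam hμ hlam x t ht i j
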